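/- arXiv:2312.05886 — 4 statements merged into one kernel-verified Lean document; each statement's English description precedes it below -/
import Mathlib

section
/- Let e and e1 be two nonadjacent (vertex-disjoint) edges of a graph G, let U and U1 be minimum edge-cuts of G − V(e) and G − V(e1) respectively, with F a fragment of G − V(e) to U and F1 a fragment of G − V(e1) to U1. Set F' = G − V(e) − V(F) and F1' = G − V(e1) − V(F1). Suppose e ∈ E(F1), e1 ∈ E(F'), and F ∩ F1 ≠ ∅. If additionally F' ∩ F1' ≠ ∅, then F ∩ F1 is a fragment of G − V(e), i.e. the edge set between F∩F1 and its complement in G − V(e) is a minimum edge-cut of G − V(e). -/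
/-- Number of edges between vertex sets `A` and `B` (counted as ordered pairs
with first coordinate in `A`; for disjoint `A`, `B` this is `d_G(A,B)`). -/
noncomputable def crossEdges {V : Type*} (G : SimpleGraph V) (A B : Set V) : ℕ :=
  {p : V × V | G.Adj p.1 p.2 ∧ p.1 ∈ A ∧ p.2 ∈ B}.ncard

/-- Edge-connectivity of the induced subgraph of `G` on the vertex set `W`:
the minimum, over nonempty proper subsets `S` of `W`, of the number of edges
between `S` and `W \ S`. -/
noncomputable def edgeConnWithin {V : Type*} (G : SimpleGraph V) (W : Set V) : ℕ :=
  sInf {n | ∃ S : Set V, S ⊆ W ∧ S.Nonempty ∧ (W \ S).Nonempty ∧ crossEdges G S (W \ S) = n}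

/-- `F` is a fragment of the induced subgraph of `G` on `W` with respect to some
minimum edge-cut: `F` and `W \ F` are nonempty, both are connected, and the set
of edges between them is a minimum edge-cut of `G[W]`. -/
def IsFragmentWithin {V : Type*} (G : SimpleGraph V) (W F : Set V) : Prop :=
  F ⊆ W ∧ F.Nonempty ∧ (W \ F).Nonempty ∧
  (G.induce F).Connected ∧ (G.induce (W \ F)).Connected ∧
  crossEdges G F (W \ F) = edgeConnWithin G W

section Helpers
variable {V : Type*} [Fintype V]

lemma crossEdges_comm (G : SimpleGraph V) (A B : Set V) :
    crossEdges G A B = crossEdges G B A := by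
  unfold crossEdges
  have h : {p : V × V | G.Adj p.1 p.2 ∧ p.1 ∈ A ∧ p.2 ∈ B} =
      Prod.swap '' {p : V × V | G.Adj p.1 p.2 ∧ p.1 ∈ B ∧ p.2 ∈ A} := by
    ext ⟨x, y⟩
    constructor
    · rintro ⟨h1, h2, h3⟩
      exact ⟨(y, x), ⟨h1.symm, h3, h2⟩, rfl⟩
    · rintro ⟨⟨u, v⟩, ⟨h1, h2, h3⟩, heq⟩
      have hv : v = x := congrArg Prod.fst heq
      have hu : u = y := congrArg Prod.snd heq
      subst hv; subst hu
      exact ⟨h1.symm, h3, h2⟩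
  rw [h, Set.ncard_image_of_injective _ Prod.swap_injective]

lemma crossEdges_union_left (G : SimpleGraph V) {A1 A2 : Set V} (B : Set V)
    (h : Disjoint A1 A2) :
    crossEdges G (A1 ∪ A2) B = crossEdges G A1 B + crossEdges G A2 B := by
  unfold crossEdges
  have hd : Disjoint {p : V × V | G.Adj p.1 p.2 ∧ p.1 ∈ A1 ∧ p.2 ∈ B}
      {p : V × V | G.Adj p.1 p.2 ∧ p.1 ∈ A2 ∧ p.2 ∈ B} := by
    rw [Set.disjoint_left]
    rintro ⟨x, y⟩ ⟨-, hx, -⟩ ⟨-, hx', -⟩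
    exact (Set.disjoint_left.mp h hx) hx'
  rw [← Set.ncard_union_eq hd (Set.toFinite _) (Set.toFinite _)]
  congr 1
  ext ⟨x, y⟩
  simp only [Set.mem_setOf_eq, Set.mem_union]
  tauto

lemma crossEdges_union_right (G : SimpleGraph V) (A : Set V) {B1 B2 : Set V}
    (h : Disjoint B1 B2) :
    crossEdges G A (B1 ∪ B2) = crossEdges G A B1 + crossEdges G A B2 := by
  rw [crossEdges_comm, crossEdges_union_left _ _ h, crossEdges_comm G B1,
    crossEdges_comm G B2]

lemma crossEdges_mono (G : SimpleGraph V) {A B A' B' : Set V} (hA : A' ⊆ A) (hB : B' ⊆ B) :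
    crossEdges G A' B' ≤ crossEdges G A B :=
  Set.ncard_le_ncard (fun p hp => ⟨hp.1, hA hp.2.1, hB hp.2.2⟩) (Set.toFinite _)

lemma edgeConnWithin_le (G : SimpleGraph V) {W S : Set V} (hS : S ⊆ W)
    (h1 : S.Nonempty) (h2 : (W \ S).Nonempty) :
    edgeConnWithin G W ≤ crossEdges G S (W \ S) :=
  Nat.sInf_le ⟨S, hS, h1, h2, rfl⟩

lemma cross_of_walk (G : SimpleGraph V) {S S1 : Set V} (h1 : S1 ⊆ S) {u v : ↥S}
    (w : (G.induce S).Walk u v) :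
    ↑u ∈ S1 → ↑v ∉ S1 → ∃ x y : V, G.Adj x y ∧ x ∈ S1 ∧ y ∈ S \ S1 := by
  induction w with
  | nil => intro h h'; exact absurd h h'
  | @cons p q r hadj w' ih =>
    intro hu hv
    by_cases hm : ↑q ∈ S1
    · exact ih hm hv
    · exact ⟨↑p, ↑q, hadj, hu, q.2, hm⟩

lemma crossEdges_pos (G : SimpleGraph V) {S S1 : Set V} (hc : (G.induce S).Connected)
    (h1 : S1 ⊆ S) (hne1 : S1.Nonempty) (hne2 : (S \ S1).Nonempty) :
    0 < crossEdges G S1 (S \ S1) := by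
  obtain ⟨u, hu⟩ := hne1
  obtain ⟨v, hv⟩ := hne2
  obtain ⟨w⟩ := hc.preconnected ⟨u, h1 hu⟩ ⟨v, hv.1⟩
  obtain ⟨x, y, hxy, hx, hy⟩ := cross_of_walk G h1 w hu hv.2
  unfold crossEdges
  exact (Set.ncard_pos (Set.toFinite _)).mpr ⟨(x, y), hxy, hx, hy⟩

lemma exists_split (G : SimpleGraph V) {A : Set V} (hne : A.Nonempty)
    (hdisc : ¬ (G.induce A).Connected) :
    ∃ S1 : Set V, S1 ⊆ A ∧ S1.Nonempty ∧ (A \ S1).Nonempty ∧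
      crossEdges G S1 (A \ S1) = 0 := by
  obtain ⟨u, hu⟩ := hne
  set S1 : Set V := {x | ∃ h : x ∈ A, (G.induce A).Reachable ⟨u, hu⟩ ⟨x, h⟩} with hS1def
  refine ⟨S1, fun x hx => hx.1, ⟨u, hu, SimpleGraph.Reachable.refl _⟩, ?_, ?_⟩
  · by_contra hemp
    rw [Set.not_nonempty_iff_eq_empty, Set.diff_eq_empty] at hemp
    haveI : Nonempty ↥A := ⟨⟨u, hu⟩⟩
    refine hdisc ⟨fun x y => ?_⟩
    obtain ⟨hxA, hrx⟩ := hemp x.2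
    obtain ⟨hyA, hry⟩ := hemp y.2
    have ex : (⟨↑x, hxA⟩ : ↥A) = x := Subtype.ext rfl
    have ey : (⟨↑y, hyA⟩ : ↥A) = y := Subtype.ext rfl
    exact ((ex ▸ hrx).symm.trans (ey ▸ hry))
  · have hset : {p : V × V | G.Adj p.1 p.2 ∧ p.1 ∈ S1 ∧ p.2 ∈ A \ S1} = ∅ := by
      ext ⟨x, y⟩
      simp only [Set.mem_setOf_eq, Set.mem_empty_iff_false, iff_false]
      rintro ⟨hadj, hxS, hyA, hyS⟩
      obtain ⟨hxA, hr⟩ := hxS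
      refine hyS ⟨hyA, hr.trans (SimpleGraph.Adj.reachable ?_)⟩
      exact (hadj : G.Adj x y)
    unfold crossEdges
    rw [hset, Set.ncard_empty]

end Helpers

section SetLems
variable {α : Type*} {F F1 W W1 P Q S A : Set α}

lemma auxWF (hQ : Q ⊆ W \ F) (hW1 : ∀ x, x ∈ W1 ↔ x ∉ Q) :
    W \ F = F1 ∩ (W \ F) ∪ ((W \ F) ∩ (W1 \ F1) ∪ Q) := by
  ext x
  have h1 := hW1 x
  have h2 : x ∈ Q → x ∈ W ∧ x ∉ F := fun h => hQ h
  simp only [Set.mem_union, Set.mem_inter_iff, Set.mem_diff]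
  tauto

lemma auxF1 (hW : ∀ x, x ∈ W ↔ x ∉ P) (hP : P ⊆ F1) :
    F1 = F ∩ F1 ∪ (F1 ∩ (W \ F) ∪ P) := by
  ext x
  have h1 := hW x
  have h2 : x ∈ P → x ∈ F1 := fun h => hP h
  simp only [Set.mem_union, Set.mem_inter_iff, Set.mem_diff]
  tauto

lemma auxW1F1 (hP : P ⊆ F1) (hFW1 : F ⊆ W1) (hW : ∀ x, x ∈ W ↔ x ∉ P) :
    W1 \ F1 = F \ F1 ∪ (W \ F) ∩ (W1 \ F1) := by
  ext x
  have h1 := hW x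
  have h2 : x ∈ P → x ∈ F1 := fun h => hP h
  have h3 : x ∈ F → x ∈ W1 := fun h => hFW1 h
  simp only [Set.mem_union, Set.mem_inter_iff, Set.mem_diff]
  tauto

lemma auxWA (hQ : Q ⊆ W \ F) (hW1 : ∀ x, x ∈ W1 ↔ x ∉ Q) (hFW : F ⊆ W) :
    W \ (F ∩ F1) = F \ F1 ∪ (F1 ∩ (W \ F) ∪ ((W \ F) ∩ (W1 \ F1) ∪ Q)) := by
  ext x
  have h1 := hW1 x
  have h2 : x ∈ Q → x ∈ W ∧ x ∉ F := fun h => hQ h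
  have h3 : x ∈ F → x ∈ W := fun h => hFW h
  simp only [Set.mem_union, Set.mem_inter_iff, Set.mem_diff]
  tauto

lemma auxT (hW : ∀ x, x ∈ W ↔ x ∉ P) (hP : P ⊆ F1) :
    W1 \ (F ∩ F1 ∪ (F \ F1 ∪ (F1 ∩ (W \ F) ∪ P))) = (W \ F) ∩ (W1 \ F1) := by
  ext x
  have h1 := hW x
  have h2 : x ∈ P → x ∈ F1 := fun h => hP h
  simp only [Set.mem_union, Set.mem_inter_iff, Set.mem_diff]
  tauto

lemma auxSp1 (h1 : S ⊆ A) (h2 : A ⊆ W) : W \ S = (A \ S) ∪ (W \ A) := by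
  ext x
  have h3 : x ∈ S → x ∈ A := fun h => h1 h
  have h4 : x ∈ A → x ∈ W := fun h => h2 h
  simp only [Set.mem_union, Set.mem_diff]
  tauto

lemma auxSp2 (h1 : S ⊆ A) (h2 : A ⊆ W) : W \ (A \ S) = S ∪ (W \ A) := by
  ext x
  have h3 : x ∈ S → x ∈ A := fun h => h1 h
  have h4 : x ∈ A → x ∈ W := fun h => h2 h
  simp only [Set.mem_union, Set.mem_diff]
  tauto

lemma auxSp3 (h1 : S ⊆ W \ A) (h2 : A ⊆ W) : W \ S = A ∪ ((W \ A) \ S) := by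
  ext x
  have h3 : x ∈ S → x ∈ W ∧ x ∉ A := fun h => h1 h
  have h4 : x ∈ A → x ∈ W := fun h => h2 h
  simp only [Set.mem_union, Set.mem_diff]
  tauto

lemma auxSp4 (h1 : S ⊆ W \ A) (h2 : A ⊆ W) : W \ ((W \ A) \ S) = A ∪ S := by
  ext x
  have h3 : x ∈ S → x ∈ W ∧ x ∉ A := fun h => h1 h
  have h4 : x ∈ A → x ∈ W := fun h => h2 h
  simp only [Set.mem_union, Set.mem_diff]
  tauto

end SetLems

set_option maxHeartbeats 1000000 in
/-- Lemma 2.1 (α). -/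
theorem stmt_2 {V : Type*} [Fintype V] (G : SimpleGraph V)
    (a b a1 b1 : V) (hab : G.Adj a b) (hab1 : G.Adj a1 b1)
    (hdisj : ({a, b} : Set V) ∩ {a1, b1} = ∅)
    (F F1 : Set V)
    (hF : IsFragmentWithin G (({a, b} : Set V)ᶜ) F)
    (hF1 : IsFragmentWithin G (({a1, b1} : Set V)ᶜ) F1)
    (heF1 : a ∈ F1 ∧ b ∈ F1)
    (he1F' : a1 ∈ ({a, b} : Set V)ᶜ \ F ∧ b1 ∈ ({a, b} : Set V)ᶜ \ F)
    (hne : (F ∩ F1).Nonempty)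
    (hne' : (((({a, b} : Set V)ᶜ \ F) ∩ ((({a1, b1} : Set V)ᶜ) \ F1))).Nonempty) :
    IsFragmentWithin G (({a, b} : Set V)ᶜ) (F ∩ F1) := by
  classical
  obtain ⟨hFW, hFne, hF'ne, hFconn, hF'conn, hFcut⟩ := hF
  obtain ⟨hF1W1, hF1ne, hF1'ne, hF1conn, hF1'conn, hF1cut⟩ := hF1
  set P : Set V := {a, b} with hPdef
  set Q : Set V := {a1, b1} with hQdef
  set W : Set V := Pᶜ with hWdef
  set W1 : Set V := Qᶜ with hW1def
  have haP : a ∈ P := by rw [hPdef]; exact Set.mem_insert _ _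
  have ha1Q : a1 ∈ Q := by rw [hQdef]; exact Set.mem_insert _ _
  have hWmem : ∀ x : V, x ∈ W ↔ x ∉ P := by intro x; rw [hWdef]; exact Set.mem_compl_iff _ _
  have hW1mem : ∀ x : V, x ∈ W1 ↔ x ∉ Q := by intro x; rw [hW1def]; exact Set.mem_compl_iff _ _
  have hPQ' : ∀ x, x ∈ P → x ∉ Q := by
    intro x hx hx'
    exact Set.eq_empty_iff_forall_notMem.mp hdisj x ⟨hx, hx'⟩
  have hPF1 : P ⊆ F1 := by
    intro x hx
    rw [hPdef] at hx
    rcases hx with rfl | hx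
    · exact heF1.1
    · rw [Set.mem_singleton_iff] at hx; subst hx; exact heF1.2
  have hQWF : Q ⊆ W \ F := by
    intro x hx
    rw [hQdef] at hx
    rcases hx with rfl | hx
    · exact he1F'.1
    · rw [Set.mem_singleton_iff] at hx; subst hx; exact he1F'.2
  have hFP : ∀ x, x ∈ F → x ∉ P := fun x hx => (hWmem x).mp (hFW hx)
  have hF1Q : ∀ x, x ∈ F1 → x ∉ Q := fun x hx => (hW1mem x).mp (hF1W1 hx)
  have hFW1 : F ⊆ W1 := fun x hx => (hW1mem x).mpr (fun hq => (hQWF hq).2 hx)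
  have hPW1 : P ⊆ W1 := fun x hx => (hW1mem x).mpr (hPQ' x hx)
  set A : Set V := F ∩ F1 with hAdef
  set B : Set V := F \ F1 with hBdef
  set C : Set V := F1 ∩ (W \ F) with hCdef
  set D : Set V := (W \ F) ∩ (W1 \ F1) with hDdef
  have hAF : A ⊆ F := by rw [hAdef]; exact Set.inter_subset_left
  have hAF1 : A ⊆ F1 := by rw [hAdef]; exact Set.inter_subset_right
  have hBF : B ⊆ F := by rw [hBdef]; exact Set.diff_subset
  have hCF1 : C ⊆ F1 := by rw [hCdef]; exact Set.inter_subset_left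
  have hCWF : C ⊆ W \ F := by rw [hCdef]; exact Set.inter_subset_right
  have hDWF : D ⊆ W \ F := by rw [hDdef]; exact Set.inter_subset_left
  have hDW1F1 : D ⊆ W1 \ F1 := by rw [hDdef]; exact Set.inter_subset_right
  have hBW1F1 : B ⊆ W1 \ F1 := by
    rw [hBdef]; exact fun x hx => ⟨hFW1 hx.1, hx.2⟩
  have hAW : A ⊆ W := fun x hx => hFW (hAF hx)
  have disjFF' : Disjoint F (W \ F) := Set.disjoint_sdiff_right
  have disjF1F1' : Disjoint F1 (W1 \ F1) := Set.disjoint_sdiff_right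
  have dAB : Disjoint A B := disjF1F1'.mono hAF1 hBW1F1
  have dAC : Disjoint A C := disjFF'.mono hAF hCWF
  have dAP : Disjoint A P := Set.disjoint_left.mpr fun x hx hp => hFP _ (hAF hx) hp
  have dBC : Disjoint B C := disjFF'.mono hBF hCWF
  have dBD : Disjoint B D := disjFF'.mono hBF hDWF
  have dBP : Disjoint B P := Set.disjoint_left.mpr fun x hx hp => hFP _ (hBF hx) hp
  have dBQ : Disjoint B Q := Set.disjoint_left.mpr fun x hx hq => (hQWF hq).2 (hBF hx)
  have dCD : Disjoint C D := disjF1F1'.mono hCF1 hDW1F1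
  have dCP : Disjoint C P := Set.disjoint_left.mpr fun x hx hp => ((hWmem _).mp (hCWF hx).1) hp
  have dCQ : Disjoint C Q := Set.disjoint_left.mpr fun x hx hq => hF1Q _ (hCF1 hx) hq
  have dDQ : Disjoint D Q := Set.disjoint_left.mpr fun x hx hq => ((hW1mem _).mp (hDW1F1 hx).1) hq
  have dC_DQ : Disjoint C (D ∪ Q) := Set.disjoint_union_right.mpr ⟨dCD, dCQ⟩
  have dB_CDQ : Disjoint B (C ∪ (D ∪ Q)) :=
    Set.disjoint_union_right.mpr ⟨dBC, Set.disjoint_union_right.mpr ⟨dBD, dBQ⟩⟩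
  have dC_P : Disjoint C P := dCP
  have dA_CP : Disjoint A (C ∪ P) := Set.disjoint_union_right.mpr ⟨dAC, dAP⟩
  have dB_CP : Disjoint B (C ∪ P) := Set.disjoint_union_right.mpr ⟨dBC, dBP⟩
  have dA_BCP : Disjoint A (B ∪ (C ∪ P)) := Set.disjoint_union_right.mpr ⟨dAB, dA_CP⟩
  -- set identities
  have hFsplit : F = A ∪ B := by rw [hAdef, hBdef]; exact (Set.inter_union_diff F F1).symm
  have hWFsplit : W \ F = C ∪ (D ∪ Q) := by
    rw [hCdef, hDdef]; exact auxWF hQWF hW1mem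
  have hF1split : F1 = A ∪ (C ∪ P) := by
    rw [hAdef, hCdef]; exact auxF1 hWmem hPF1
  have hW1F1split : W1 \ F1 = B ∪ D := by
    rw [hBdef, hDdef]; exact auxW1F1 hPF1 hFW1 hWmem
  have hWAsplit : W \ A = B ∪ (C ∪ (D ∪ Q)) := by
    rw [hAdef, hBdef, hCdef, hDdef]; exact auxWA hQWF hW1mem hFW
  have hTsub : A ∪ (B ∪ (C ∪ P)) ⊆ W1 :=
    Set.union_subset (fun x hx => hF1W1 (hAF1 hx))
      (Set.union_subset (fun x hx => (hBW1F1 hx).1)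
        (Set.union_subset (fun x hx => hF1W1 (hCF1 hx)) hPW1))
  have hTsplit : W1 \ (A ∪ (B ∪ (C ∪ P))) = D := by
    rw [hAdef, hBdef, hCdef, hDdef]; exact auxT hWmem hPF1
  -- expand the two cut equalities
  rw [hWFsplit, hFsplit, crossEdges_union_left G _ dAB,
    crossEdges_union_right G A dC_DQ, crossEdges_union_right G B dC_DQ,
    crossEdges_union_right G A dDQ, crossEdges_union_right G B dDQ] at hFcut
  rw [hW1F1split, hF1split, crossEdges_union_left G _ dA_CP,
    crossEdges_union_left G _ dC_P,
    crossEdges_union_right G A dBD, crossEdges_union_right G C dBD,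
    crossEdges_union_right G P dBD] at hF1cut
  -- the two sInf inequalities
  have ha1WA : a1 ∈ W \ A := ⟨(hQWF ha1Q).1, fun hx => (hQWF ha1Q).2 (hAF hx)⟩
  have i1 : edgeConnWithin G W ≤ crossEdges G A (W \ A) :=
    edgeConnWithin_le G hAW hne ⟨a1, ha1WA⟩
  have i1' := i1
  rw [hWAsplit, crossEdges_union_right G A dB_CDQ, crossEdges_union_right G A dC_DQ,
    crossEdges_union_right G A dDQ] at i1'
  have haT : a ∈ A ∪ (B ∪ (C ∪ P)) :=
    Set.mem_union_right _ (Set.mem_union_right _ (Set.mem_union_right _ haP))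
  have i2 : edgeConnWithin G W1 ≤
      crossEdges G (A ∪ (B ∪ (C ∪ P))) (W1 \ (A ∪ (B ∪ (C ∪ P)))) :=
    edgeConnWithin_le G hTsub ⟨a, haT⟩ (hTsplit ▸ hne')
  rw [hTsplit, crossEdges_union_left G _ dA_BCP, crossEdges_union_left G _ dB_CP,
    crossEdges_union_left G _ dC_P] at i2
  -- the cut equality for A
  have hAcut : crossEdges G A (W \ A) = edgeConnWithin G W := by
    rw [hWAsplit, crossEdges_union_right G A dB_CDQ, crossEdges_union_right G A dC_DQ,
      crossEdges_union_right G A dDQ]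
    omega
  -- connectivity of A
  have hAconn : (G.induce A).Connected := by
    by_contra hcon
    obtain ⟨S1, hS1A, hS1ne, hAS1ne, hzero⟩ := exists_split G hne hcon
    have hS1F : S1 ⊆ F := fun x hx => hAF (hS1A hx)
    have hS1W : S1 ⊆ W := fun x hx => hFW (hS1F hx)
    have hsp1 : W \ S1 = (A \ S1) ∪ (W \ A) := auxSp1 hS1A hAW
    have hd1 : Disjoint (A \ S1) (W \ A) := Set.disjoint_left.mpr fun x hx hy => hy.2 hx.1
    have j1 : edgeConnWithin G W ≤ crossEdges G S1 (W \ S1) :=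
      edgeConnWithin_le G hS1W hS1ne
        ⟨a1, (hQWF ha1Q).1, fun h => (hQWF ha1Q).2 (hS1F h)⟩
    rw [hsp1, crossEdges_union_right G S1 hd1, hzero] at j1
    have hsp2 : W \ (A \ S1) = S1 ∪ (W \ A) := auxSp2 hS1A hAW
    have hd2 : Disjoint S1 (W \ A) := Set.disjoint_left.mpr fun x hx hy => hy.2 (hS1A hx)
    have hzero' : crossEdges G (A \ S1) S1 = 0 := by rw [crossEdges_comm]; exact hzero
    have j2 : edgeConnWithin G W ≤ crossEdges G (A \ S1) (W \ (A \ S1)) :=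
      edgeConnWithin_le G (fun x hx => hAW hx.1) hAS1ne
        ⟨a1, (hQWF ha1Q).1, fun h => (hQWF ha1Q).2 (hAF h.1)⟩
    rw [hsp2, crossEdges_union_right G _ hd2, hzero'] at j2
    have hAsp : A = S1 ∪ (A \ S1) := (Set.union_diff_cancel hS1A).symm
    have hd3 : Disjoint S1 (A \ S1) := Set.disjoint_sdiff_right
    have jt : crossEdges G S1 (W \ A) + crossEdges G (A \ S1) (W \ A)
        = edgeConnWithin G W := by
      rw [← crossEdges_union_left G (W \ A) hd3, ← hAsp]
      exact hAcut
    obtain ⟨x0, hx0⟩ := hAS1ne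
    have hpos : 0 < crossEdges G S1 (F \ S1) :=
      crossEdges_pos G hFconn hS1F hS1ne ⟨x0, hAF hx0.1, hx0.2⟩
    have hsub : F \ S1 ⊆ (A \ S1) ∪ (W \ A) := by
      intro x hx
      by_cases hxA : x ∈ A
      · exact Or.inl ⟨hxA, hx.2⟩
      · exact Or.inr ⟨hFW hx.1, hxA⟩
    have hle2 : crossEdges G S1 (F \ S1) ≤ crossEdges G S1 ((A \ S1) ∪ (W \ A)) :=
      crossEdges_mono G (subset_refl _) hsub
    rw [crossEdges_union_right G S1 hd1, hzero] at hle2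
    omega
  -- connectivity of W \ A
  have hRconn : (G.induce (W \ A)).Connected := by
    by_contra hcon
    obtain ⟨S1, hS1R, hS1ne, hRS1ne, hzero⟩ := exists_split G ⟨a1, ha1WA⟩ hcon
    have hS1W : S1 ⊆ W := fun x hx => (hS1R hx).1
    have hX2R : (W \ A) \ S1 ⊆ W \ A := Set.diff_subset
    have hsp1 : W \ S1 = A ∪ ((W \ A) \ S1) := auxSp3 hS1R hAW
    have hdAX2 : Disjoint A ((W \ A) \ S1) :=
      Set.disjoint_left.mpr fun x hx hy => (hX2R hy).2 hx
    obtain ⟨x0, hx0A⟩ := hne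
    have j1 : edgeConnWithin G W ≤ crossEdges G S1 (W \ S1) :=
      edgeConnWithin_le G hS1W hS1ne ⟨x0, hAW hx0A, fun h => (hS1R h).2 hx0A⟩
    rw [hsp1, crossEdges_union_right G S1 hdAX2, hzero] at j1
    have hsp2 : W \ ((W \ A) \ S1) = A ∪ S1 := auxSp4 hS1R hAW
    have hdAS1 : Disjoint A S1 := Set.disjoint_left.mpr fun x hx hy => (hS1R hy).2 hx
    have hzero' : crossEdges G ((W \ A) \ S1) S1 = 0 := by rw [crossEdges_comm]; exact hzero
    have j2 : edgeConnWithin G W ≤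
        crossEdges G ((W \ A) \ S1) (W \ ((W \ A) \ S1)) :=
      edgeConnWithin_le G (fun x hx => (hX2R hx).1) hRS1ne
        ⟨x0, hAW hx0A, fun h => (hX2R h).2 hx0A⟩
    rw [hsp2, crossEdges_union_right G _ hdAS1, hzero'] at j2
    have hRsp : W \ A = S1 ∪ ((W \ A) \ S1) := (Set.union_diff_cancel hS1R).symm
    have hd3 : Disjoint S1 ((W \ A) \ S1) := Set.disjoint_sdiff_right
    have jt : crossEdges G S1 A + crossEdges G ((W \ A) \ S1) A
        = edgeConnWithin G W := by
      rw [← crossEdges_union_left G A hd3, ← hRsp, crossEdges_comm]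
      exact hAcut
    rcases Set.eq_empty_or_nonempty ((W \ F) ∩ S1) with hcase | hcase
    · have hS1F : S1 ⊆ F := by
        intro x hx
        by_contra hxF
        exact Set.eq_empty_iff_forall_notMem.mp hcase x ⟨⟨hS1W hx, hxF⟩, hx⟩
      have hpos : 0 < crossEdges G S1 (F \ S1) :=
        crossEdges_pos G hFconn hS1F hS1ne ⟨x0, hAF hx0A, fun h => (hS1R h).2 hx0A⟩
      have hsub : F \ S1 ⊆ A ∪ ((W \ A) \ S1) := by
        intro x hx
        by_cases hxA : x ∈ A
        · exact Or.inl hxA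
        · exact Or.inr ⟨⟨hFW hx.1, hxA⟩, hx.2⟩
      have hle2 : crossEdges G S1 (F \ S1) ≤ crossEdges G S1 (A ∪ ((W \ A) \ S1)) :=
        crossEdges_mono G (subset_refl _) hsub
      rw [crossEdges_union_right G S1 hdAX2, hzero] at hle2
      omega
    · rcases Set.eq_empty_or_nonempty ((W \ F) ∩ ((W \ A) \ S1)) with hcase2 | hcase2
      · have hX2F : (W \ A) \ S1 ⊆ F := by
          intro x hx
          by_contra hxF
          exact Set.eq_empty_iff_forall_notMem.mp hcase2 x ⟨⟨(hX2R hx).1, hxF⟩, hx⟩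
        have hpos : 0 < crossEdges G ((W \ A) \ S1) (F \ ((W \ A) \ S1)) :=
          crossEdges_pos G hFconn hX2F hRS1ne ⟨x0, hAF hx0A, fun h => (hX2R h).2 hx0A⟩
        have hsub : F \ ((W \ A) \ S1) ⊆ A ∪ S1 := by
          intro x hx
          by_cases hxA : x ∈ A
          · exact Or.inl hxA
          · refine Or.inr ?_
            by_contra hxS1
            exact hx.2 ⟨⟨hFW hx.1, hxA⟩, hxS1⟩
        have hle2 : crossEdges G ((W \ A) \ S1) (F \ ((W \ A) \ S1)) ≤
            crossEdges G ((W \ A) \ S1) (A ∪ S1) :=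
          crossEdges_mono G (subset_refl _) hsub
        rw [crossEdges_union_right G _ hdAS1, hzero'] at hle2
        omega
      · have hdiffsub : (W \ F) \ ((W \ F) ∩ S1) ⊆ (W \ A) \ S1 := by
          intro x hx
          exact ⟨⟨hx.1.1, fun hA => hx.1.2 (hAF hA)⟩, fun hS => hx.2 ⟨hx.1, hS⟩⟩
        have hdiffne : ((W \ F) \ ((W \ F) ∩ S1)).Nonempty := by
          obtain ⟨z, hz⟩ := hcase2
          exact ⟨z, hz.1, fun hc => hz.2.2 hc.2⟩
        have hpos : 0 < crossEdges G ((W \ F) ∩ S1) ((W \ F) \ ((W \ F) ∩ S1)) :=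
          crossEdges_pos G hF'conn Set.inter_subset_left hcase hdiffne
        have hle2 : crossEdges G ((W \ F) ∩ S1) ((W \ F) \ ((W \ F) ∩ S1)) ≤
            crossEdges G S1 ((W \ A) \ S1) :=
          crossEdges_mono G Set.inter_subset_right hdiffsub
        omega
  exact ⟨hAW, hne, ⟨a1, ha1WA⟩, hAconn, hRconn, hAcut⟩
end

section
/- Let e and e1 be two nonadjacent edges of a graph G, let U and U1 be minimum edge-cuts of G − V(e) and G − V(e1) respectively, with F a fragment of G − V(e) to U and F1 a fragment of G − V(e1) to U1. Set F' = G − V(e) − V(F) and F1' = G − V(e1) − V(F1). Suppose e ∈ E(F1), e1 ∈ E(F'), and F ∩ F1 ≠ ∅. If F' ∩ F1' = ∅, then |V(F')| < |V(F1)|. -/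
/-- Lemma 2.1 (β). -/
theorem stmt_3 {V : Type*} [Fintype V] (G : SimpleGraph V)
    (a b a1 b1 : V) (hab : G.Adj a b) (hab1 : G.Adj a1 b1)
    (hdisj : ({a, b} : Set V) ∩ {a1, b1} = ∅)
    (F F1 : Set V)
    (hF : IsFragmentWithin G (({a, b} : Set V)ᶜ) F)
    (hF1 : IsFragmentWithin G (({a1, b1} : Set V)ᶜ) F1)
    (heF1 : a ∈ F1 ∧ b ∈ F1)
    (he1F' : a1 ∈ ({a, b} : Set V)ᶜ \ F ∧ b1 ∈ ({a, b} : Set V)ᶜ \ F)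
    (hne : (F ∩ F1).Nonempty)
    (hempty : ((({a, b} : Set V)ᶜ \ F) ∩ ((({a1, b1} : Set V)ᶜ) \ F1)) = ∅) :
    (({a, b} : Set V)ᶜ \ F).ncard < F1.ncard := by
  classical
  obtain ⟨x, hxF, hxF1⟩ := hne
  have hF1sub : F1 ⊆ ({a1, b1} : Set V)ᶜ := hF1.1
  have hFsub : F ⊆ ({a, b} : Set V)ᶜ := hF.1
  have ha1F1 : a1 ∉ F1 := fun h => hF1sub h (by simp)
  have hb1F1 : b1 ∉ F1 := fun h => hF1sub h (by simp)
  have hxa : x ≠ a := fun h => hFsub hxF (by simp [h])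
  have hxb : x ≠ b := fun h => hFsub hxF (by simp [h])
  have hab' : a ≠ b := hab.ne
  have ha1b1 : a1 ≠ b1 := hab1.ne
  -- F' ⊆ (F1 ∪ {a1,b1}) \ {a,b,x}
  have hsub : (({a, b} : Set V)ᶜ \ F) ⊆ (F1 ∪ {a1, b1}) \ {a, b, x} := by
    intro y hy
    constructor
    · by_cases hy1 : y ∈ F1
      · exact Or.inl hy1
      · by_cases hy2 : y ∈ ({a1, b1} : Set V)ᶜ
        · exact absurd (Set.eq_empty_iff_forall_notMem.mp hempty y ⟨hy, hy2, hy1⟩) (fun h => h)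
        · exact Or.inr (Set.notMem_compl_iff.mp hy2)
    · intro hmem
      rcases hmem with h | h | h
      · exact hy.1 (Or.inl h)
      · exact hy.1 (Or.inr h)
      · exact hy.2 (h ▸ hxF)
  have hfin : (F1 ∪ {a1, b1} : Set V).Finite := Set.toFinite _
  have habx : ({a, b, x} : Set V) ⊆ F1 ∪ {a1, b1} :=
    fun y hy => by rcases hy with h | h | h <;> subst h <;> exact Or.inl (by tauto)
  have hcard1 : ((F1 ∪ {a1, b1}) \ {a, b, x} : Set V).ncard
      = (F1 ∪ {a1, b1} : Set V).ncard - ({a, b, x} : Set V).ncard :=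
    Set.ncard_diff habx
  have hcardU : (F1 ∪ {a1, b1} : Set V).ncard = F1.ncard + 2 := by
    rw [Set.ncard_union_eq (by
      rw [Set.disjoint_left]; intro y hy hmem
      rcases hmem with h | h
      · exact ha1F1 (h ▸ hy)
      · exact hb1F1 (h ▸ hy)) (Set.toFinite _) (Set.toFinite _)]
    rw [Set.ncard_pair ha1b1]
  have hcard3 : ({a, b, x} : Set V).ncard = 3 := by
    rw [Set.ncard_insert_of_notMem (by simp [hab', hxa.symm, hxb.symm]) (Set.toFinite _),
      Set.ncard_pair (Ne.symm hxb)]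
  have hF1ge : 3 ≤ F1.ncard := by
    have : ({a, b, x} : Set V) ⊆ F1 := by
      intro y hy; rcases hy with h | h | h <;> subst h
      · exact heF1.1
      · exact heF1.2
      · exact hxF1
    calc 3 = ({a, b, x} : Set V).ncard := hcard3.symm
      _ ≤ F1.ncard := Set.ncard_le_ncard this (Set.toFinite _)
  have hle := Set.ncard_le_ncard hsub (Set.toFinite _)
  rw [hcard1, hcardU, hcard3] at hle
  omega
end

section
/- Let G be a graph with δ(G) ≥ k+2, let e1 be an edge with κ'(G − V(e1)) < k, and let F1, F1' be the two fragments of G − V(e1) to a minimum edge-cut. If every vertex z of F1 satisfies |N_G(z) ∩ V(F1')| ≥ k − |V(F1)| + 1 and 2 ≤ |V(F1)| < k, then the number of edges between F1 and F1' is at least 2(k−1); consequently if k ≥ 3 this contradicts d_G(F1, F1') < k. -/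
/-- Lower bound for crossEdges by summing degrees into `B` over vertices of `A`. -/
lemma crossEdges_ge {V : Type*} [Fintype V] (G : SimpleGraph V) (A B : Set V) (c : ℕ)
    (h : ∀ z ∈ A, c ≤ (G.neighborSet z ∩ B).ncard) :
    A.ncard * c ≤ crossEdges G A B := by
  classical
  have hrw : {p : V × V | G.Adj p.1 p.2 ∧ p.1 ∈ A ∧ p.2 ∈ B}.ncard
      = ((Finset.univ : Finset (V × V)).filter
        fun p => G.Adj p.1 p.2 ∧ p.1 ∈ A ∧ p.2 ∈ B).card := by
    rw [Set.ncard_eq_toFinset_card', Set.toFinset_setOf]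
  rw [crossEdges, hrw, Set.ncard_eq_toFinset_card' A]
  rw [Finset.card_eq_sum_card_fiberwise
    (f := Prod.fst) (t := A.toFinset) (by intro x hx; simp at hx ⊢; exact hx.2.1)]
  rw [← smul_eq_mul, ← Finset.sum_const]
  apply Finset.sum_le_sum
  intro a ha
  have haA : a ∈ A := by simpa using ha
  have : ((Finset.univ.filter fun p : V × V => G.Adj p.1 p.2 ∧ p.1 ∈ A ∧ p.2 ∈ B).filter
      fun p => p.1 = a) = ({a} : Finset V) ×ˢ ((G.neighborSet a ∩ B).toFinset) := by
    ext ⟨x, y⟩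
    simp only [Finset.mem_filter, Finset.mem_univ, true_and, Finset.mem_product,
      Finset.mem_singleton, Set.mem_toFinset, Set.mem_inter_iff, SimpleGraph.mem_neighborSet]
    constructor
    · rintro ⟨⟨hadj, _, hyB⟩, rfl⟩; exact ⟨rfl, hadj, hyB⟩
    · rintro ⟨rfl, hadj, hyB⟩; exact ⟨⟨hadj, haA, hyB⟩, rfl⟩
  rw [this, Finset.card_product, Finset.card_singleton, one_mul,
    ← Set.ncard_eq_toFinset_card']
  exact h a haA

/-- The counting step in the proof of Theorem 3.1. -/
theorem stmt_6 {V : Type*} [Fintype V] [DecidableEq V] (G : SimpleGraph V) [DecidableRel G.Adj]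
    (k : ℕ) (hk : 0 < k)
    (hδ : ∀ v : V, k + 2 ≤ G.degree v)
    (a1 b1 : V) (h1 : G.Adj a1 b1)
    (hlt : edgeConnWithin G (({a1, b1} : Set V)ᶜ) < k)
    (F1 : Set V) (hF1 : IsFragmentWithin G (({a1, b1} : Set V)ᶜ) F1)
    (hnbr : ∀ z ∈ F1, k - F1.ncard + 1 ≤ (G.neighborSet z ∩ ((({a1, b1} : Set V)ᶜ) \ F1)).ncard)
    (h2 : 2 ≤ F1.ncard) (hsmall : F1.ncard < k) :
    2 * (k - 1) ≤ crossEdges G F1 ((({a1, b1} : Set V)ᶜ) \ F1) ∧ (3 ≤ k → False) := by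
  classical
  set m := F1.ncard with hm
  have key : m * (k - m + 1) ≤ crossEdges G F1 ((({a1, b1} : Set V)ᶜ) \ F1) :=
    crossEdges_ge G _ _ _ hnbr
  have harith : 2 * (k - 1) ≤ m * (k - m + 1) := by
    obtain ⟨s, hs⟩ : ∃ s, k = m + s ∧ 1 ≤ s := ⟨k - m, by omega⟩
    obtain ⟨rfl, hs1⟩ := hs
    have hsub : m + s - m + 1 = s + 1 := by omega
    rw [hsub]
    zify [show (1:ℕ) ≤ m + s by omega]
    have hm2 : (2:ℤ) ≤ (m:ℤ) := by exact_mod_cast h2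
    have hs2 : (1:ℤ) ≤ (s:ℤ) := by exact_mod_cast hs1
    nlinarith [mul_nonneg (by linarith : (0:ℤ) ≤ (m:ℤ) - 2) (by linarith : (0:ℤ) ≤ (s:ℤ) - 1)]
  have hmain : 2 * (k - 1) ≤ crossEdges G F1 ((({a1, b1} : Set V)ᶜ) \ F1) :=
    le_trans harith key
  refine ⟨hmain, fun hk3 => ?_⟩
  have heq := hF1.2.2.2.2.2
  omega
end

section
/- Let F1 be a fragment of G − V(e1) with complementary fragment F1', where δ(G) ≥ k+2 and d_G(F1, F1') < k. If every edge e of F1 has an endpoint-pair V(e) with at least one edge to F1' (i.e., d_G(V(e), F1') > 0 for all e ∈ E(F1)), and some vertex u ∈ V(F1) has no neighbor in F1', then |N_G(u) ∩ V(F1)| ≥ k, contradicting d_G(F1, F1') < k; hence every vertex of F1 has a neighbor in F1' and |V(F1)| < k. -/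
private lemma card_le_crossEdges {V : Type*} [Fintype V] (G : SimpleGraph V) (A B : Set V)
    (h : ∀ a ∈ A, ∃ b ∈ B, G.Adj a b) : A.ncard ≤ crossEdges G A B := by
  have h' : ∀ a : V, ∃ b : V, a ∈ A → b ∈ B ∧ G.Adj a b := by
    intro a
    by_cases ha : a ∈ A
    · obtain ⟨b, hb, hab⟩ := h a ha
      exact ⟨b, fun _ => ⟨hb, hab⟩⟩
    · exact ⟨a, fun h => absurd h ha⟩
  choose f hf using h'
  apply Set.ncard_le_ncard_of_injOn (fun a => (a, f a))
  · intro a ha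
    exact ⟨(hf a ha).2, ha, (hf a ha).1⟩
  · intro a _ a' _ hEq
    exact congrArg Prod.fst hEq

private lemma crossEdges_mono_left {V : Type*} [Fintype V] (G : SimpleGraph V)
    {A A' : Set V} (B : Set V) (h : A ⊆ A') : crossEdges G A B ≤ crossEdges G A' B := by
  apply Set.ncard_le_ncard _ (Set.toFinite _)
  rintro p ⟨hp, h1, h2⟩
  exact ⟨hp, h h1, h2⟩

/-- Every vertex of the fragment F1 has a neighbour in F1', and |V(F1)| < k. -/
theorem stmt_12 {V : Type*} [Fintype V] [DecidableEq V] (G : SimpleGraph V) [DecidableRel G.Adj]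
    (k : ℕ) (hk : 0 < k)
    (hδ : ∀ v : V, k + 2 ≤ G.degree v)
    (a1 b1 : V) (h1 : G.Adj a1 b1)
    (F1 : Set V) (hF1 : IsFragmentWithin G (({a1, b1} : Set V)ᶜ) F1)
    (hlt : crossEdges G F1 ((({a1, b1} : Set V)ᶜ) \ F1) < k)
    (hedge : ∀ a b : V, G.Adj a b → a ∈ F1 → b ∈ F1 →
      0 < crossEdges G ({a, b} : Set V) ((({a1, b1} : Set V)ᶜ) \ F1)) :
    (∀ u ∈ F1, (G.neighborSet u ∩ ((({a1, b1} : Set V)ᶜ) \ F1)).Nonempty) ∧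
      F1.ncard < k := by
  set B : Set V := (({a1, b1} : Set V)ᶜ) \ F1 with hB
  have key : ∀ u ∈ F1, (G.neighborSet u ∩ B).Nonempty := by
    intro u hu
    by_contra hno
    rw [Set.not_nonempty_iff_eq_empty] at hno
    have hnoB : ∀ w : V, G.Adj u w → w ∉ B := by
      intro w hw hwB
      have : w ∈ G.neighborSet u ∩ B := ⟨hw, hwB⟩
      simp [hno] at this
    -- N = neighbors of u inside F1
    set N : Set V := G.neighborSet u ∩ F1 with hN
    have hsub : G.neighborSet u ⊆ N ∪ ({a1, b1} : Set V) := by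
      intro w hw
      by_cases hab : w ∈ ({a1, b1} : Set V)
      · exact Or.inr hab
      · left
        refine ⟨hw, ?_⟩
        by_contra hwF
        exact hnoB w hw ⟨hab, hwF⟩
    have hdeg : (G.neighborSet u).ncard = G.degree u := by
      rw [Set.ncard_eq_toFinset_card', Set.toFinset_card]
      exact G.card_neighborSet_eq_degree u
    have hNcard : k ≤ N.ncard := by
      have h2 : ({a1, b1} : Set V).ncard ≤ 2 := by
        apply le_trans (Set.ncard_insert_le _ _)
        simp
      have := Set.ncard_le_ncard hsub (Set.toFinite _)
      have hun := Set.ncard_union_le N ({a1, b1} : Set V)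
      have hd := hδ u
      omega
    have hNB : N.ncard ≤ crossEdges G N B := by
      apply card_le_crossEdges
      intro v hv
      have hadj : G.Adj u v := hv.1
      have hpos := hedge u v hadj hu hv.2
      have hne : {p : V × V | G.Adj p.1 p.2 ∧ p.1 ∈ ({u, v} : Set V) ∧ p.2 ∈ B}.Nonempty := by
        rw [← Set.ncard_pos (Set.toFinite _)]
        exact hpos
      obtain ⟨p, hp, hp1, hp2⟩ := hne
      rcases hp1 with h | h
      · exact absurd hp2 (hnoB p.2 (h ▸ hp))
      · simp only [Set.mem_singleton_iff] at h
        exact ⟨p.2, hp2, h ▸ hp⟩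
    have hmono : crossEdges G N B ≤ crossEdges G F1 B :=
      crossEdges_mono_left G B (fun x hx => hx.2)
    omega
  refine ⟨key, ?_⟩
  have : F1.ncard ≤ crossEdges G F1 B := by
    apply card_le_crossEdges
    intro u hu
    obtain ⟨w, hw1, hw2⟩ := key u hu
    exact ⟨w, hw2, hw1⟩
  omega
end
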